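/- Let K be an algebraically closed field of characteristic different from 2, g ≥ 2 an integer, and a_1, …, a_{2g+2} pairwise distinct elements of K. Fix an index i, and for each k ≠ i choose symmetric roots of the pair (i,k) via some λ_{ik} with λ_{ik}^{2g} = ∏_{r ∉ {i,k}} (a_k − a_r)/(a_i − a_r), with corresponding symmetric discriminant d_{ik}. Then ∏_{k ≠ i} d_{ik} = 1. -/

import Mathlib

/-!
For fixed `i` and `k`, each symmetric root is a Möbius image of a branch point, and
`ℓ_r - ℓ_s = λ (a_i - a_k) (a_r - a_s) / ((a_k - a_r) (a_k - a_s))`. Hence `d_{ik}` is the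
discriminant `D_k` of the `a_r`, `r ∉ {i, k}`, times a power of `λ (a_i - a_k)` divided by a
power of `P_k = ∏_r (a_k - a_r)`. The normalisation `λ^{2g} = P_k / ∏_r (a_i - a_r)`, together
with `D_k P_k² = Δ` (an even number of sign changes), where `Δ` is the discriminant of all
`a_r`, `r ≠ i`, rewrites `d_{ik}` in terms of `Δ`, `P_k`, `a_i - a_k` and
`A = ∏_{r ≠ i} (a_i - a_r)` alone. Since `∏_k P_k = Δ` and `∏_k (a_i - a_k) = A`, the product
over `k` collapses to `1`.
-/

open Finset

/-- The symmetric root `ℓ_{ijk} = λ·(a_i − a_k)/(a_j − a_k)` attached to the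
branch points `a_1, …, a_{2g+2}`, the pair `(i,j)` and a choice of scalar `λ`. -/
noncomputable def symRoot {K : Type*} [Field K] (g : ℕ) (a : Fin (2 * g + 2) → K)
    (i j : Fin (2 * g + 2)) (lam : K) (k : Fin (2 * g + 2)) : K :=
  lam * (a i - a k) / (a j - a k)

/-- The symmetric discriminant `d_{ij} = ∏_{r ≠ s, r,s ∉ {i,j}} (ℓ_{ijr} − ℓ_{ijs})`,
the product taken over ordered pairs of distinct indices `r, s` outside `{i,j}`. -/
noncomputable def symDisc {K : Type*} [Field K] (g : ℕ) (a : Fin (2 * g + 2) → K)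
    (i j : Fin (2 * g + 2)) (lam : K) : K :=
  ∏ r ∈ univ \ {i, j}, ∏ s ∈ (univ \ {i, j}) \ {r},
    (symRoot g a i j lam r - symRoot g a i j lam s)

namespace Finset

variable {ι M : Type*} [DecidableEq ι] [CommMonoid M]

theorem sdiff_pair_eq_erase_erase (s : Finset ι) (i j : ι) :
    s \ {i, j} = (s.erase i).erase j := by
  rw [sdiff_insert, sdiff_singleton_eq_erase, erase_right_comm]

theorem prod_prod_erase_comm (s : Finset ι) (f : ι → ι → M) :
    ∏ r ∈ s, ∏ t ∈ s.erase r, f r t = ∏ t ∈ s, ∏ r ∈ s.erase t, f r t :=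
  prod_comm' fun r t => by simp only [mem_erase]; tauto

theorem prod_prod_erase_left (s : Finset ι) (f : ι → M) :
    ∏ r ∈ s, ∏ _t ∈ s.erase r, f r = ∏ r ∈ s, f r ^ (#s - 1) :=
  prod_congr rfl fun r hr => by rw [prod_const, card_erase_of_mem hr]

theorem prod_prod_erase_right (s : Finset ι) (f : ι → M) :
    ∏ r ∈ s, ∏ t ∈ s.erase r, f t = ∏ r ∈ s, f r ^ (#s - 1) := by
  rw [prod_prod_erase_comm, prod_prod_erase_left]

end Finset

section OrderedDisc

variable {ι K : Type*} [DecidableEq ι] [Field K]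

def orderedDisc (s : Finset ι) (x : ι → K) : K :=
  ∏ r ∈ s, ∏ t ∈ s.erase r, (x r - x t)

theorem orderedDisc_ne_zero {s : Finset ι} {x : ι → K} (hx : Set.InjOn x s) :
    orderedDisc s x ≠ 0 :=
  prod_ne_zero_iff.2 fun _ hr => prod_ne_zero_iff.2 fun _ ht =>
    sub_ne_zero.2 fun h => (ne_of_mem_erase ht) (hx (mem_of_mem_erase ht) hr h.symm)

theorem orderedDisc_insert {s : Finset ι} {k : ι} (hk : k ∉ s) (x : ι → K) :
    orderedDisc (insert k s) x
      = orderedDisc s x * ∏ r ∈ s, ((x k - x r) * (x r - x k)) := by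
  have hrow : ∀ r ∈ s, ∏ t ∈ (insert k s).erase r, (x r - x t)
      = (x r - x k) * ∏ t ∈ s.erase r, (x r - x t) := fun r hr => by
    rw [erase_insert_of_ne (ne_of_mem_of_not_mem hr hk).symm,
      prod_insert fun h => hk (mem_of_mem_erase h)]
  rw [orderedDisc, prod_insert hk, erase_insert hk, prod_congr rfl hrow, prod_mul_distrib,
    orderedDisc, prod_mul_distrib]
  ring

theorem orderedDisc_insert_of_even {s : Finset ι} {k : ι} (hk : k ∉ s) (hs : Even #s)
    (x : ι → K) :
    orderedDisc (insert k s) x = orderedDisc s x * (∏ r ∈ s, (x k - x r)) ^ 2 := by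
  have hsq : ∀ r ∈ s, (x k - x r) * (x r - x k) = -1 * (x k - x r) ^ 2 := fun _ _ => by ring
  rw [orderedDisc_insert hk, prod_congr rfl hsq, prod_mul_distrib, prod_const, hs.neg_one_pow,
    one_mul, prod_pow]

theorem moebius_sub_moebius {lam c p u v : K} (hu : u ≠ p) (hv : v ≠ p) :
    lam * (c - u) / (p - u) - lam * (c - v) / (p - v)
      = lam * (c - p) * (u - v) / ((p - u) * (p - v)) := by
  have hu' : p - u ≠ 0 := sub_ne_zero.2 hu.symm
  have hv' : p - v ≠ 0 := sub_ne_zero.2 hv.symm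
  field_simp
  ring

theorem orderedDisc_moebius {s : Finset ι} {x : ι → K} {p : K} (hp : ∀ r ∈ s, x r ≠ p)
    (lam c : K) :
    orderedDisc s (fun r => lam * (c - x r) / (p - x r))
      = ((lam * (c - p)) ^ #s / (∏ r ∈ s, (p - x r)) ^ 2) ^ (#s - 1) * orderedDisc s x := by
  have hdiff : ∀ r ∈ s, ∀ t ∈ s.erase r,
      lam * (c - x r) / (p - x r) - lam * (c - x t) / (p - x t)
        = lam * (c - p) * (x r - x t) / ((p - x r) * (p - x t)) := fun r hr t ht =>
    moebius_sub_moebius (hp r hr) (hp t (mem_of_mem_erase ht))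
  rw [orderedDisc, prod_congr rfl fun r hr => prod_congr rfl (hdiff r hr)]
  simp only [prod_div_distrib, prod_mul_distrib]
  rw [prod_prod_erase_left s (fun _ => lam), prod_prod_erase_left s (fun _ => c - p),
    prod_prod_erase_left s (fun r => p - x r), prod_prod_erase_right s (fun r => p - x r),
    ← orderedDisc]
  simp only [prod_const, prod_pow, mul_pow]
  ring

theorem orderedDisc_moebius_erase {T : Finset ι} (hT : Odd #T) {x : ι → K} (hx : Set.InjOn x T)
    {c : K} (hc : ∀ r ∈ T, x r ≠ c) {k : ι} (hk : k ∈ T) {lam : K}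
    (hlam : lam ^ (#T - 1) = ∏ r ∈ T.erase k, (x k - x r) / (c - x r)) :
    orderedDisc (T.erase k) (fun r => lam * (c - x r) / (x k - x r))
      = ((c - x k) ^ #T / ((∏ r ∈ T, (c - x r)) * ∏ r ∈ T.erase k, (x k - x r))) ^ (#T - 2)
        * orderedDisc T x / (∏ r ∈ T.erase k, (x k - x r)) ^ 2 := by
  obtain ⟨m, hm⟩ := Nat.exists_eq_add_one_of_ne_zero (card_ne_zero_of_mem hk)
  have hxk : ∀ r ∈ T.erase k, x r ≠ x k := fun r hr h =>
    ne_of_mem_erase hr (hx (mem_of_mem_erase hr) hk h)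
  have hP : ∏ r ∈ T.erase k, (x k - x r) ≠ 0 :=
    prod_ne_zero_iff.2 fun r hr => sub_ne_zero.2 (hxk r hr).symm
  have hQ : ∏ r ∈ T.erase k, (c - x r) ≠ 0 :=
    prod_ne_zero_iff.2 fun r hr => sub_ne_zero.2 (hc r (mem_of_mem_erase hr)).symm
  have hck : c - x k ≠ 0 := sub_ne_zero.2 (hc k hk).symm
  have hΔ : orderedDisc T x
      = orderedDisc (T.erase k) x * (∏ r ∈ T.erase k, (x k - x r)) ^ 2 := by
    conv_lhs => rw [← insert_erase hk]
    refine orderedDisc_insert_of_even (notMem_erase k T) ?_ x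
    rw [card_erase_of_mem hk]
    exact hT.tsub_odd odd_one
  rw [orderedDisc_moebius hxk, card_erase_of_mem hk, mul_pow, hlam, hΔ, ← mul_prod_erase T _ hk,
    prod_div_distrib, hm, Nat.add_sub_cancel, show m + 1 - 2 = m - 1 by omega]
  have hbase : (∏ r ∈ T.erase k, (x k - x r)) / (∏ r ∈ T.erase k, (c - x r)) * (c - x k) ^ m
        / (∏ r ∈ T.erase k, (x k - x r)) ^ 2
      = (c - x k) ^ (m + 1)
        / ((c - x k) * (∏ r ∈ T.erase k, (c - x r)) * ∏ r ∈ T.erase k, (x k - x r)) := by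
    field_simp
    ring
  rw [hbase, mul_div_assoc, mul_div_cancel_right₀ _ (pow_ne_zero 2 hP)]

theorem prod_orderedDisc_moebius_eq_one {T : Finset ι} (hT : Odd #T) {x : ι → K}
    (hx : Set.InjOn x T) {c : K} (hc : ∀ r ∈ T, x r ≠ c) {lam : ι → K}
    (hlam : ∀ k ∈ T, lam k ^ (#T - 1) = ∏ r ∈ T.erase k, (x k - x r) / (c - x r)) :
    ∏ k ∈ T, orderedDisc (T.erase k) (fun r => lam k * (c - x r) / (x k - x r)) = 1 := by
  have hA : ∏ r ∈ T, (c - x r) ≠ 0 :=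
    prod_ne_zero_iff.2 fun r hr => sub_ne_zero.2 (hc r hr).symm
  have hΔ := orderedDisc_ne_zero hx
  rw [prod_congr rfl fun k hk => orderedDisc_moebius_erase hT hx hc hk (hlam k hk)]
  simp only [prod_div_distrib, prod_mul_distrib, prod_pow, prod_const]
  rw [← orderedDisc]
  obtain ⟨n, hn⟩ := hT
  rcases n with _ | n
  · obtain ⟨k, rfl⟩ := card_eq_one.1 hn
    simp [orderedDisc]
  rw [hn, div_mul_cancel_left₀ (pow_ne_zero _ hA), show 2 * (n + 1) + 1 - 2 = 2 * n + 1 by omega,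
    show 2 * (n + 1) + 1 = 2 * n + 1 + 2 by omega, inv_pow, pow_add _ (2 * n + 1) 2, ← mul_assoc,
    inv_mul_cancel₀ (pow_ne_zero _ hΔ), one_mul, div_self (pow_ne_zero _ hΔ)]

end OrderedDisc

theorem symDisc_eq_orderedDisc {K : Type*} [Field K] (g : ℕ) (a : Fin (2 * g + 2) → K)
    (i j : Fin (2 * g + 2)) (lam : K) :
    symDisc g a i j lam = orderedDisc ((univ.erase i).erase j) (symRoot g a i j lam) := by
  simp only [symDisc, orderedDisc, sdiff_pair_eq_erase_erase, sdiff_singleton_eq_erase]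

theorem prod_symDisc_eq_one_general
    {K : Type*} [Field K]
    (g : ℕ) (a : Fin (2 * g + 2) → K) (ha : Function.Injective a)
    (i : Fin (2 * g + 2)) (lam : Fin (2 * g + 2) → K)
    (hlam : ∀ k, k ≠ i →
      (lam k) ^ (2 * g) = ∏ r ∈ univ \ {i, k}, (a k - a r) / (a i - a r)) :
    ∏ k ∈ univ \ {i}, symDisc g a i k (lam k) = 1 := by
  have hcard : #(univ.erase i) = 2 * g + 1 := by simp
  simp only [sdiff_singleton_eq_erase, symDisc_eq_orderedDisc]
  refine prod_orderedDisc_moebius_eq_one (by rw [hcard]; exact odd_two_mul_add_one g) ha.injOn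
    (fun r hr => ha.ne (ne_of_mem_erase hr)) fun k hk => ?_
  rw [hcard, Nat.add_sub_cancel, hlam k (ne_of_mem_erase hk), sdiff_pair_eq_erase_erase]

/-- the product of the symmetric discriminants `d_{ik}` over all
`k ≠ i` equals `1`. -/
theorem prod_symDisc_eq_one
    {K : Type*} [Field K] [IsAlgClosed K] (hchar : (2 : K) ≠ 0)
    (g : ℕ) (hg : 2 ≤ g) (a : Fin (2 * g + 2) → K) (ha : Function.Injective a)
    (i : Fin (2 * g + 2)) (lam : Fin (2 * g + 2) → K)
    (hlam : ∀ k, k ≠ i →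
      (lam k) ^ (2 * g) = ∏ r ∈ univ \ {i, k}, (a k - a r) / (a i - a r)) :
    ∏ k ∈ univ \ {i}, symDisc g a i k (lam k) = 1 :=
  prod_symDisc_eq_one_general g a ha i lam hlam
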